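/- arXiv:1508.05712 — 5 statements merged into one kernel-verified Lean document; each statement's English description precedes it below -/
import Mathlib

section
/- For 0 ≤ r ≤ 8, a class D ∈ Λ_r is exceptional if and only if D is obtained by permuting the last r coordinates of one of the following vectors (restricted to those that fit in r+1 coordinates, padding with zeros): (0; 1, 0, …, 0) for r ≥ 1; (1; −1, −1, 0, …, 0) for r ≥ 2; (2; −1, −1, −1, −1, −1, 0, …, 0) for r ≥ 5; (3; −2, −1, −1, −1, −1, −1, −1, 0) for r ≥ 7; (4; −2, −2, −2, −1, −1, −1, −1, −1), (5; −2, −2, −2, −2, −2, −2, −1, −1), and (6; −3, −2, −2, −2, −2, −2, −2, −2) for r = 8. Here (a; b₁, …, b_r) denotes the class aL + b₁E₁ + ⋯ + b_rE_r, i.e., the vector (a, b₁, …, b_r) ∈ Λ_r. -/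
/-- The intersection pairing on the Picard lattice `Λ_r = ℤ^(r+1)`:
`⟨x, y⟩ = x₀y₀ − x₁y₁ − ⋯ − x_r y_r`. -/
def pair {r : ℕ} (x y : Fin (r + 1) → ℤ) : ℤ :=
  x 0 * y 0 - ∑ i : Fin r, x i.succ * y i.succ

/-- The canonical class `K_r = (−3, 1, …, 1)`. -/
def Kc (r : ℕ) : Fin (r + 1) → ℤ := fun i => if i = 0 then -3 else 1

/-- Exceptional classes (classes of `(−1)`-curves). -/
def Exceptional {r : ℕ} (E : Fin (r + 1) → ℤ) : Prop :=
  pair E E = -1 ∧ pair (Kc r) E = -1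

/-- Nef classes: nonnegative pairing with every exceptional class. -/
def Nef {r : ℕ} (D : Fin (r + 1) → ℤ) : Prop :=
  ∀ E : Fin (r + 1) → ℤ, Exceptional E → 0 ≤ pair D E

/-- Conics: nef classes `Q` with `⟨Q,Q⟩ = 0` and `⟨K,Q⟩ = −2`. -/
def Conic {r : ℕ} (Q : Fin (r + 1) → ℤ) : Prop :=
  Nef Q ∧ pair Q Q = 0 ∧ pair (Kc r) Q = -2

/-- Twisted cubics: nef classes `C` with `⟨C,C⟩ = 1` and `⟨K,C⟩ = −3`. -/
def TwistedCubic {r : ℕ} (C : Fin (r + 1) → ℤ) : Prop :=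
  Nef C ∧ pair C C = 1 ∧ pair (Kc r) C = -3

/-- The types of exceptional classes: a leading coefficient (of `L`) together
with the list of nonzero coefficients of the `E_i` (to be padded with zeros
and permuted). -/
def baseVectors : List (ℤ × List ℤ) :=
  [(0, [1]),
   (1, [-1, -1]),
   (2, [-1, -1, -1, -1, -1]),
   (3, [-2, -1, -1, -1, -1, -1, -1]),
   (4, [-2, -2, -2, -1, -1, -1, -1, -1]),
   (5, [-2, -2, -2, -2, -2, -2, -1, -1]),
   (6, [-3, -2, -2, -2, -2, -2, -2, -2])]

/-! An exceptional class `(a; b₁, …, b_r)` amounts to an integer `a` and a multiset `b` with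
`∑ bᵢ² = a² + 1` and `∑ bᵢ = 1 - 3a`. Pad `b` with zeros to eight entries. Cauchy–Schwarz and
`|∑ uᵢ| ≤ ∑ uᵢ²` for integer vectors pin `a` to `0, …, 6`, and for each such `a` some integer `t`
has `∑ (bᵢ - t)² ≤ 3`, so every `bᵢ` lies within `1` of `t`. A multiset supported on three
consecutive integers is determined by its size, sum and sum of squares, so `b` is the padded base
vector of degree `a`, up to order. -/

open Finset

theorem exists_perm_iff_map_univ_eq {ι α : Type*} [Fintype ι] [DecidableEq α] {f g : ι → α} :
    (∃ σ : Equiv.Perm ι, ∀ i, f i = g (σ i)) ↔ univ.val.map f = univ.val.map g := by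
  constructor
  · rintro ⟨σ, hσ⟩
    rw [show f = g ∘ σ from funext hσ, ← Multiset.map_map, Multiset.map_univ_val_equiv]
  · intro h
    have hfiber (c : α) : Fintype.card {i // f i = c} = Fintype.card {i // g i = c} := by
      have := congr_arg (Multiset.count c) h
      simp only [Multiset.count_map, Fintype.card_subtype, eq_comm (a := c)] at this ⊢
      exact this
    exact ⟨Equiv.ofFiberEquiv fun c => Fintype.equivOfCardEq (hfiber c),
      fun i => (Equiv.ofFiberEquiv_map _ i).symm⟩

theorem Fin.univ_val_map_getD {α : Type*} {n : ℕ} (l : List α) (d : α) (h : l.length ≤ n) :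
    univ.val.map (fun j : Fin n => l.getD j d) = ↑l + Multiset.replicate (n - l.length) d := by
  rw [Fin.univ_val_map, ← Multiset.coe_replicate, Multiset.coe_add, Multiset.coe_eq_coe]
  apply List.Perm.of_eq
  apply List.ext_getElem (by simp; omega)
  intro i h1 h2
  simp only [List.getElem_ofFn, List.getD_eq_getElem?_getD, List.getElem_append,
    List.getElem_replicate]
  split_ifs with hi <;> simp [hi]

namespace Multiset

theorem sq_sum_le_card_mul_sum_sq {α : Type*} [CommSemiring α] [LinearOrder α]
    [IsStrictOrderedRing α] [ExistsAddOfLE α] (m : Multiset α) :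
    m.sum ^ 2 ≤ card m * (m.map (· ^ 2)).sum := by
  obtain ⟨n, f, rfl⟩ : ∃ n, ∃ f : Fin n → α, m = univ.val.map f :=
    ⟨_, m.toList.get, by rw [Fin.univ_val_map, List.ofFn_get, coe_toList]⟩
  rw [map_map, card_map, card_val, ← Finset.sum_eq_multiset_sum,
    ← Finset.sum_eq_multiset_sum]
  exact _root_.sq_sum_le_card_mul_sum_sq

theorem eq_add_replicate_of_add_replicate_eq {α : Type*} [DecidableEq α] {m : Multiset α}
    {l : List α} {z : α} {j k : ℕ} (hz : z ∉ l)
    (h : m + replicate j z = ↑l + replicate k z) :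
    l.length ≤ card m ∧ m = ↑l + replicate (card m - l.length) z := by
  have hrep (i : ℕ) : (replicate i z).filter (· ≠ z) = 0 :=
    filter_eq_nil.2 fun x hx => by simp [eq_of_mem_replicate hx]
  have hfilter : m.filter (· ≠ z) = ↑l := by
    have hl : ∀ x ∈ (l : Multiset α), x ≠ z := fun x hx hxz => hz (hxz ▸ mem_coe.1 hx)
    have := congr_arg (filter (· ≠ z)) h
    rwa [filter_add, filter_add, hrep, hrep, add_zero, add_zero, filter_eq_self.2 hl] at this
  have hsplit : m = ↑l + replicate (count z m) z := by
    conv_lhs => rw [← filter_add_not (· ≠ z) m]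
    simp only [hfilter, ne_eq, not_not, filter_eq']
  have hcard : card m = l.length + count z m := by
    conv_lhs => rw [hsplit]
    simp
  refine ⟨by omega, ?_⟩
  rwa [hcard, Nat.add_sub_cancel_left]

theorem abs_sum_le_sum_sq (m : Multiset ℤ) : |m.sum| ≤ (m.map (· ^ 2)).sum :=
  abs_sum_le_sum_abs.trans <| sum_map_le_sum_map _ _ fun x _ => by
    simpa using Int.natAbs_le_self_sq x

theorem sum_map_sub_const (m : Multiset ℤ) (t : ℤ) :
    (m.map (· - t)).sum = m.sum - card m * t := by
  induction m using Multiset.induction_on with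
  | empty => simp
  | cons x m ih =>
    simp only [map_cons, sum_cons, card_cons, ih]
    push_cast
    ring

theorem sum_sq_map_sub_const (m : Multiset ℤ) (t : ℤ) :
    ((m.map (· - t)).map (· ^ 2)).sum = (m.map (· ^ 2)).sum - 2 * t * m.sum + card m * t ^ 2 := by
  induction m using Multiset.induction_on with
  | empty => simp
  | cons x m ih =>
    simp only [map_cons, sum_cons, card_cons, ih]
    push_cast
    ring

theorem abs_le_one_of_sum_sq_le_three {m : Multiset ℤ} (h : (m.map (· ^ 2)).sum ≤ 3) :
    ∀ x ∈ m, |x| ≤ 1 := by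
  intro x hx
  have hx3 : x ^ 2 ≤ 3 :=
    (single_le_sum (fun y hy => by obtain ⟨z, -, rfl⟩ := mem_map.1 hy; positivity) _
      (mem_map_of_mem _ hx)).trans h
  rw [abs_le]
  constructor <;> nlinarith

theorem count_eq_of_abs_le_one {m : Multiset ℤ} (hm : ∀ x ∈ m, |x| ≤ 1) :
    2 * (count 1 m : ℤ) = (m.map (· ^ 2)).sum + m.sum ∧
    2 * (count (-1) m : ℤ) = (m.map (· ^ 2)).sum - m.sum ∧
    (count 0 m : ℤ) = card m - (m.map (· ^ 2)).sum := by
  induction m using Multiset.induction_on with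
  | empty => simp
  | cons x m ih =>
    obtain ⟨h1, h2, h3⟩ := ih fun y hy => hm y (mem_cons_of_mem hy)
    have hx : x = -1 ∨ x = 0 ∨ x = 1 := by
      have := abs_le.1 (hm x (mem_cons_self x m)); omega
    rcases hx with rfl | rfl | rfl <;> simp <;> omega

theorem eq_of_abs_le_one {m m' : Multiset ℤ} (hm : ∀ x ∈ m, |x| ≤ 1) (hm' : ∀ x ∈ m', |x| ≤ 1)
    (hcard : card m = card m') (hsum : m.sum = m'.sum)
    (hsq : (m.map (· ^ 2)).sum = (m'.map (· ^ 2)).sum) : m = m' := by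
  obtain ⟨h1, h2, h3⟩ := count_eq_of_abs_le_one hm
  obtain ⟨h1', h2', h3'⟩ := count_eq_of_abs_le_one hm'
  ext y
  by_cases hy : |y| ≤ 1
  · have : y = -1 ∨ y = 0 ∨ y = 1 := by have := abs_le.1 hy; omega
    rcases this with rfl | rfl | rfl <;> omega
  · rw [count_eq_zero.2 fun h => hy (hm y h), count_eq_zero.2 fun h => hy (hm' y h)]

end Multiset

def eCoeffs {r : ℕ} (D : Fin (r + 1) → ℤ) : Multiset ℤ :=
  univ.val.map fun j : Fin r => D j.succ

def IsExceptionalType (a : ℤ) (m : Multiset ℤ) : Prop :=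
  (m.map (· ^ 2)).sum = a ^ 2 + 1 ∧ m.sum = 1 - 3 * a

theorem card_eCoeffs {r : ℕ} (D : Fin (r + 1) → ℤ) : Multiset.card (eCoeffs D) = r := by
  simp [eCoeffs]

theorem exceptional_iff_isExceptionalType {r : ℕ} (D : Fin (r + 1) → ℤ) :
    Exceptional D ↔ IsExceptionalType (D 0) (eCoeffs D) := by
  have hsq : pair D D = D 0 ^ 2 - ((eCoeffs D).map (· ^ 2)).sum := by
    simp only [pair, eCoeffs, Multiset.map_map, Function.comp_def, ← Finset.sum_eq_multiset_sum,
      sq]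
  have hK : pair (Kc r) D = -3 * D 0 - (eCoeffs D).sum := by
    simp [pair, Kc, eCoeffs, Fin.succ_ne_zero, -Fin.univ_val_map]
  rw [Exceptional, IsExceptionalType, hsq, hK]
  constructor <;> rintro ⟨h1, h2⟩ <;> constructor <;> linarith

theorem isExceptionalType_add_replicate_zero {a : ℤ} {m : Multiset ℤ} {k : ℕ} :
    IsExceptionalType a (m + Multiset.replicate k 0) ↔ IsExceptionalType a m := by
  simp [IsExceptionalType]

theorem isExceptionalType_of_mem_baseVectors {p : ℤ × List ℤ} (hp : p ∈ baseVectors) :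
    IsExceptionalType p.1 p.2 := by
  have : ∀ p ∈ baseVectors, (p.2.map (· ^ 2)).sum = p.1 ^ 2 + 1 ∧ p.2.sum = 1 - 3 * p.1 := by
    decide
  simpa [IsExceptionalType] using this p hp

namespace IsExceptionalType

variable {a : ℤ} {M M' : Multiset ℤ}

theorem mem_Icc (h : IsExceptionalType a M) (hM : Multiset.card M = 8) :
    a ∈ Finset.Icc 0 6 := by
  -- Cauchy–Schwarz leaves `-1 ≤ a ≤ 7`; `h0` says `a (a + 3) ≥ 0` and `h2` says
  -- `(a - 6) (a - 9) ≥ 0`, which exclude the two ends.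
  have hcs := M.sq_sum_le_card_mul_sum_sq
  have h0 := M.abs_sum_le_sum_sq
  have h2 := (M.map (· - (-2))).abs_sum_le_sum_sq
  rw [h.1, h.2, hM] at hcs
  rw [h.1, h.2] at h0
  rw [Multiset.sum_map_sub_const, Multiset.sum_sq_map_sub_const, h.1, h.2, hM] at h2
  push_cast at hcs h2
  have ha7 : a ≤ 7 := by nlinarith
  have ha1 : -1 ≤ a := by nlinarith
  rw [abs_le] at h0 h2
  rw [Finset.mem_Icc]
  constructor
  · by_contra! ha; nlinarith
  · by_contra! ha; nlinarith

theorem eq_of_card_eq_eight (h : IsExceptionalType a M) (h' : IsExceptionalType a M')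
    (hM : Multiset.card M = 8) (hM' : Multiset.card M' = 8) : M = M' := by
  obtain ⟨ha0, ha6⟩ := Finset.mem_Icc.1 (h.mem_Icc hM)
  obtain ⟨t, ht⟩ : ∃ t : ℤ, a ^ 2 + 1 - 2 * t * (1 - 3 * a) + 8 * t ^ 2 ≤ 3 :=
    ⟨if a ≤ 1 then 0 else if a ≤ 4 then -1 else -2, by interval_cases a <;> norm_num⟩
  have hshift {N : Multiset ℤ} (hN : IsExceptionalType a N) (hN8 : Multiset.card N = 8) :
      ∀ x ∈ N.map (· - t), |x| ≤ 1 :=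
    Multiset.abs_le_one_of_sum_sq_le_three <| by
      rw [Multiset.sum_sq_map_sub_const, hN.1, hN.2, hN8]
      push_cast
      linarith
  refine Multiset.map_injective (sub_left_injective (b := t)) ?_
  apply Multiset.eq_of_abs_le_one (hshift h hM) (hshift h' hM')
  · simp [hM, hM']
  · rw [Multiset.sum_map_sub_const, Multiset.sum_map_sub_const, h.2, h'.2, hM, hM']
  · rw [Multiset.sum_sq_map_sub_const, Multiset.sum_sq_map_sub_const, h.1, h'.1, h.2, h'.2, hM,
      hM']

theorem exists_mem_baseVectors (h : IsExceptionalType a M) (hM : Multiset.card M ≤ 8) :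
    ∃ p ∈ baseVectors, p.2.length ≤ Multiset.card M ∧ a = p.1 ∧
      M = (p.2 : Multiset ℤ) + Multiset.replicate (Multiset.card M - p.2.length) 0 := by
  have hpad : IsExceptionalType a (M + Multiset.replicate (8 - Multiset.card M) 0) :=
    isExceptionalType_add_replicate_zero.2 h
  have hbase : ∀ p ∈ baseVectors, p.2.length ≤ 8 ∧ 0 ∉ p.2 := by decide
  have hdeg : ∀ a ∈ Finset.Icc (0 : ℤ) 6, ∃ p ∈ baseVectors, p.1 = a := by decide
  obtain ⟨p, hp, rfl⟩ := hdeg a (hpad.mem_Icc (by simp; omega))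
  have hpad' :
      IsExceptionalType p.1 ((p.2 : Multiset ℤ) + Multiset.replicate (8 - p.2.length) 0) :=
    isExceptionalType_add_replicate_zero.2 (isExceptionalType_of_mem_baseVectors hp)
  have heq := hpad.eq_of_card_eq_eight hpad' (by simp; omega)
    (by simp; have := (hbase p hp).1; omega)
  obtain ⟨hlen, hM⟩ := Multiset.eq_add_replicate_of_add_replicate_eq (hbase p hp).2 heq
  exact ⟨p, hp, hlen, rfl, hM⟩

end IsExceptionalType

/-- For `0 ≤ r ≤ 8`, a class `D ∈ Λ_r` is exceptional if and only if it is
obtained by permuting the last `r` coordinates (and padding with zeros) of one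
of the base vectors that fits in `r + 1` coordinates. -/
theorem exceptional_classification (r : ℕ) (hr : r ≤ 8) (D : Fin (r + 1) → ℤ) :
    Exceptional D ↔
      ∃ p ∈ baseVectors, p.2.length ≤ r ∧
        ∃ σ : Equiv.Perm (Fin r),
          D 0 = p.1 ∧ ∀ j : Fin r, D j.succ = p.2.getD (σ j : ℕ) 0 := by
  rw [exceptional_iff_isExceptionalType]
  constructor
  · intro h
    obtain ⟨p, hp, hlen, ha, hm⟩ := h.exists_mem_baseVectors ((card_eCoeffs D).trans_le hr)
    rw [card_eCoeffs] at hlen hm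
    obtain ⟨σ, hσ⟩ :=
      exists_perm_iff_map_univ_eq.2 (hm.trans (Fin.univ_val_map_getD p.2 0 hlen).symm)
    exact ⟨p, hp, hlen, σ, ha, hσ⟩
  · rintro ⟨p, hp, hlen, σ, ha, hσ⟩
    have hm : eCoeffs D = (p.2 : Multiset ℤ) + Multiset.replicate (r - p.2.length) 0 :=
      (exists_perm_iff_map_univ_eq.1 ⟨σ, hσ⟩).trans (Fin.univ_val_map_getD p.2 0 hlen)
    rw [ha, hm, isExceptionalType_add_replicate_zero]
    exact isExceptionalType_of_mem_baseVectors hp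
end

section
/- For 3 ≤ r ≤ 8, the number of conics in the lattice Λ_r is: 3 for r = 3, 5 for r = 4, 10 for r = 5, 27 for r = 6, 126 for r = 7, and 2160 for r = 8. -/
/-!
For `r ≤ 8` the Hodge index inequality `(9 - r) ⟨v,v⟩ ≤ ⟨K,v⟩²` makes every numerical conic
(`⟨Q,Q⟩ = 0`, `⟨K,Q⟩ = −2`) nef: if `⟨Q,E⟩ < 0` for an exceptional `E`, then `v = 2Q − 3E` has
`⟨K,v⟩ = −1` but `⟨v,v⟩ ≥ 3`. Nefness against the exceptional classes `e₁, …, e_r` forces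
`Q = (d, −w₁, …, −w_r)` with `wᵢ ∈ ℕ`, `∑ wᵢ = 3d − 2` and `∑ wᵢ² = d²`, and Cauchy–Schwarz
gives `1 ≤ d ≤ 11`. The conics are thus counted by enumerating such `w`, pruning by Cauchy–Schwarz.
-/

section Pairing

variable {r : ℕ}

lemma pair_comm (x y : Fin (r + 1) → ℤ) : pair x y = pair y x := by
  simp only [pair, mul_comm]

lemma pair_add_left (x y z : Fin (r + 1) → ℤ) : pair (x + y) z = pair x z + pair y z := by
  simp only [pair, Pi.add_apply, add_mul, Finset.sum_add_distrib]
  ring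

lemma pair_smul_left (a : ℤ) (x y : Fin (r + 1) → ℤ) : pair (a • x) y = a * pair x y := by
  simp only [pair, Pi.smul_apply, smul_eq_mul, mul_assoc, ← Finset.mul_sum]
  ring

lemma pair_add_right (x y z : Fin (r + 1) → ℤ) : pair x (y + z) = pair x y + pair x z := by
  rw [pair_comm, pair_add_left, pair_comm y, pair_comm z]

lemma pair_smul_right (a : ℤ) (x y : Fin (r + 1) → ℤ) : pair x (a • y) = a * pair x y := by
  rw [pair_comm, pair_smul_left, pair_comm]

lemma pair_Kc_left (v : Fin (r + 1) → ℤ) : pair (Kc r) v = -3 * v 0 - ∑ i : Fin r, v i.succ := by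
  simp [pair, Kc, Fin.succ_ne_zero]

lemma pair_single_succ (x : Fin (r + 1) → ℤ) (j : Fin r) :
    pair x (Pi.single j.succ 1) = -x j.succ := by
  simp [pair, Pi.single_apply, Fin.succ_ne_zero]

theorem hodge_index_Kc (hr : r ≤ 9) (v : Fin (r + 1) → ℤ) :
    (9 - r : ℤ) * pair v v ≤ pair (Kc r) v ^ 2 := by
  rw [pair_Kc_left, pair]
  set S := ∑ i : Fin r, v i.succ
  set T := ∑ i : Fin r, v i.succ * v i.succ
  have hCS : S ^ 2 ≤ r * T := by
    simpa [sq] using sq_sum_le_card_mul_sum_sq (s := Finset.univ) (f := fun i : Fin r => v i.succ)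
  rcases Nat.eq_zero_or_pos r with rfl | hr0
  · simp only [S, T, Finset.univ_eq_empty, Finset.sum_empty]
    exact le_of_eq (by ring)
  · have hr' : (r : ℤ) ≤ 9 := by exact_mod_cast hr
    have hr0' : (0 : ℤ) < r := by exact_mod_cast hr0
    -- `r ((3v₀ + S)² − (9 − r)(v₀² − T)) = (r v₀ + 3S)² + (9 − r)(rT − S²)`
    nlinarith [sq_nonneg (r * v 0 + 3 * S), mul_nonneg (sub_nonneg.2 hr') (sub_nonneg.2 hCS)]

theorem nef_of_numerical (hr : r ≤ 8) {Q : Fin (r + 1) → ℤ} (hQQ : pair Q Q = 0)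
    (hKQ : pair (Kc r) Q = -2) : Nef Q := by
  rintro E ⟨hEE, hKE⟩
  by_contra! hQE
  have h := hodge_index_Kc (by omega) ((2 : ℤ) • Q + (-3 : ℤ) • E)
  simp only [pair_add_left, pair_add_right, pair_smul_left, pair_smul_right, pair_comm E Q,
    hQQ, hKQ, hEE, hKE] at h
  have hr' : (r : ℤ) ≤ 8 := by exact_mod_cast hr
  nlinarith

lemma exceptional_single_succ (j : Fin r) : Exceptional (Pi.single j.succ 1 : Fin (r + 1) → ℤ) := by
  constructor <;> simp [pair_single_succ, Kc, Fin.succ_ne_zero]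

lemma Nef.apply_succ_nonpos {D : Fin (r + 1) → ℤ} (hD : Nef D) (j : Fin r) : D j.succ ≤ 0 := by
  have := hD _ (exceptional_single_succ j)
  rw [pair_single_succ] at this
  omega

end Pairing

open Finset

section Enumeration

def sumSqVecs : (n : ℕ) → ℕ → ℕ → Finset (Fin n → ℕ)
  | 0, m, b => if m = 0 ∧ b = 0 then {0} else ∅
  | n + 1, m, b => ((range (m + 1)).filter fun k => k ^ 2 ≤ b).biUnion
      fun k => (sumSqVecs n (m - k) (b - k ^ 2)).image (Fin.cons k)

lemma mem_sumSqVecs {n m b : ℕ} {w : Fin n → ℕ} :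
    w ∈ sumSqVecs n m b ↔ ∑ i, w i = m ∧ ∑ i, w i ^ 2 = b := by
  induction n generalizing m b with
  | zero =>
    rw [sumSqVecs]
    split_ifs with h <;> simp [h, Subsingleton.elim w 0, eq_comm (a := 0)]
  | succ n ih =>
    simp only [sumSqVecs, mem_biUnion, mem_filter, mem_range, mem_image, ih, Fin.sum_univ_succ]
    constructor
    · rintro ⟨k, ⟨hkm, hkb⟩, w', ⟨hs, hq⟩, rfl⟩
      simp only [Fin.cons_zero, Fin.cons_succ]
      omega
    · rintro ⟨hs, hq⟩
      refine ⟨w 0, ⟨by omega, by omega⟩, Fin.tail w, ⟨?_, ?_⟩, Fin.cons_self_tail w⟩ <;>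
        simp only [Fin.tail] <;> omega

lemma sumSqVecs_eq_empty {n m b : ℕ} (h : n * b < m * m) : sumSqVecs n m b = ∅ := by
  refine eq_empty_of_forall_notMem fun w hw => ?_
  obtain ⟨hs, hq⟩ := mem_sumSqVecs.1 hw
  have := sq_sum_le_card_mul_sum_sq (s := univ) (f := w)
  rw [hs, hq, card_univ, Fintype.card_fin] at this
  nlinarith

def sumSqCount : ℕ → ℕ → ℕ → ℕ
  | 0, m, b => if m = 0 ∧ b = 0 then 1 else 0
  | n + 1, m, b =>
    if (n + 1) * b < m * m then 0
    else ∑ k ∈ (range (m + 1)).filter (fun k => k ^ 2 ≤ b), sumSqCount n (m - k) (b - k ^ 2)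

lemma card_sumSqVecs (n m b : ℕ) : #(sumSqVecs n m b) = sumSqCount n m b := by
  induction n generalizing m b with
  | zero => simp only [sumSqVecs, sumSqCount]; split_ifs <;> rfl
  | succ n ih =>
    rw [sumSqCount]
    split_ifs with h
    · rw [sumSqVecs_eq_empty h, card_empty]
    rw [sumSqVecs, card_biUnion]
    · exact sum_congr rfl fun k _ => by
        rw [card_image_of_injective _ (Fin.cons_right_injective _), ih]
    · intro k _ k' _ hkk'
      simp only [Function.onFun, disjoint_left, mem_image]
      rintro _ ⟨w, -, rfl⟩ ⟨w', -, h⟩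
      exact hkk' (by simpa using congr_fun h 0 : k' = k).symm

end Enumeration

section Conics

variable {r : ℕ}

def conicOfSumSq (d : ℕ) (w : Fin r → ℕ) : Fin (r + 1) → ℤ := Fin.cons (d : ℤ) fun i => -(w i : ℤ)

lemma conicOfSumSq_injective (d : ℕ) : Function.Injective (conicOfSumSq (r := r) d) :=
  fun w w' h => funext fun i => by simpa [conicOfSumSq] using congr_fun h i.succ

-- `(3d − 2)² ≤ r d² ≤ 8 d²` forces `d ≤ 11`.
def conicFinset (r : ℕ) : Finset (Fin (r + 1) → ℤ) :=
  (Icc 1 11).biUnion fun d => (sumSqVecs r (3 * d - 2) (d ^ 2)).image (conicOfSumSq d)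

lemma pair_conicOfSumSq_self (d : ℕ) (w : Fin r → ℕ) :
    pair (conicOfSumSq d w) (conicOfSumSq d w) = (d : ℤ) ^ 2 - ∑ i, (w i : ℤ) ^ 2 := by
  simp [pair, conicOfSumSq, sq]

lemma pair_Kc_conicOfSumSq (d : ℕ) (w : Fin r → ℕ) :
    pair (Kc r) (conicOfSumSq d w) = -3 * d + ∑ i, (w i : ℤ) := by
  simp [pair_Kc_left, conicOfSumSq]

lemma conic_conicOfSumSq (hr : r ≤ 8) {d : ℕ} (hd : 1 ≤ d) {w : Fin r → ℕ}
    (hw : w ∈ sumSqVecs r (3 * d - 2) (d ^ 2)) : Conic (conicOfSumSq d w) := by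
  obtain ⟨hs, hq⟩ := mem_sumSqVecs.1 hw
  have hQQ : pair (conicOfSumSq d w) (conicOfSumSq d w) = 0 := by
    rw [pair_conicOfSumSq_self, sub_eq_zero]
    exact_mod_cast hq.symm
  have hKQ : pair (Kc r) (conicOfSumSq d w) = -2 := by
    rw [pair_Kc_conicOfSumSq, ← Nat.cast_sum, hs]
    push_cast [Nat.cast_sub (by omega : 2 ≤ 3 * d)]
    ring
  exact ⟨nef_of_numerical hr hQQ hKQ, hQQ, hKQ⟩

lemma Conic.exists_eq_conicOfSumSq (hr : r ≤ 8) {Q : Fin (r + 1) → ℤ} (hQ : Conic Q) :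
    ∃ d ∈ Icc 1 11, ∃ w ∈ sumSqVecs r (3 * d - 2) (d ^ 2), conicOfSumSq d w = Q := by
  obtain ⟨hnef, hQQ, hKQ⟩ := hQ
  obtain ⟨w, hw⟩ : ∃ w : Fin r → ℕ, ∀ i, Q i.succ = -(w i : ℤ) :=
    ⟨fun i => (-Q i.succ).toNat, fun i => by have := hnef.apply_succ_nonpos i; beta_reduce; omega⟩
  have hs : ∑ i, (w i : ℤ) = 3 * Q 0 - 2 := by
    rw [pair_Kc_left] at hKQ
    simp only [hw, sum_neg_distrib] at hKQ
    linarith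
  have hq : ∑ i, (w i : ℤ) ^ 2 = Q 0 ^ 2 := by
    simp only [pair, hw, neg_mul_neg, sq] at hQQ ⊢
    linarith
  have hd1 : 1 ≤ Q 0 := by
    have : 0 ≤ ∑ i, (w i : ℤ) := sum_nonneg fun i _ => Nat.cast_nonneg _
    omega
  have hd11 : Q 0 ≤ 11 := by
    have hCS := sq_sum_le_card_mul_sum_sq (s := univ) (f := fun i => (w i : ℤ))
    rw [hs, hq, card_univ, Fintype.card_fin] at hCS
    have hr' : (r : ℤ) ≤ 8 := by exact_mod_cast hr
    nlinarith
  obtain ⟨d, hd⟩ : ∃ d : ℕ, Q 0 = d := ⟨(Q 0).toNat, by omega⟩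
  refine ⟨d, mem_Icc.2 ⟨by omega, by omega⟩, w, mem_sumSqVecs.2 ⟨?_, ?_⟩, ?_⟩
  · zify [show 2 ≤ 3 * d by omega]
    rw [← hd, hs]
  · rw [hd] at hq
    exact_mod_cast hq
  · funext i
    cases i using Fin.cases <;> simp [conicOfSumSq, hd, hw]

lemma mem_conicFinset (hr : r ≤ 8) {Q : Fin (r + 1) → ℤ} : Q ∈ conicFinset r ↔ Conic Q := by
  simp only [conicFinset, mem_biUnion, mem_image]
  constructor
  · rintro ⟨d, hd, w, hw, rfl⟩
    exact conic_conicOfSumSq hr (mem_Icc.1 hd).1 hw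
  · exact fun hQ => hQ.exists_eq_conicOfSumSq hr

def conicCount (r : ℕ) : ℕ := ∑ d ∈ Icc 1 11, sumSqCount r (3 * d - 2) (d ^ 2)

lemma card_conicFinset : #(conicFinset r) = conicCount r := by
  rw [conicFinset, card_biUnion]
  · exact sum_congr rfl fun d _ => by
      rw [card_image_of_injective _ (conicOfSumSq_injective d), card_sumSqVecs]
  · intro d _ d' _ hdd'
    simp only [Function.onFun, disjoint_left, mem_image]
    rintro _ ⟨w, -, rfl⟩ ⟨w', -, h⟩
    exact hdd' (by simpa [conicOfSumSq] using congr_fun h 0 : d' = d).symm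

end Conics

/-- The number of conics in `Λ_r` for `3 ≤ r ≤ 8` is `3, 5, 10, 27, 126, 2160`. -/
theorem conic_count (r : ℕ) (h3 : 3 ≤ r) (h8 : r ≤ 8) :
    {Q : Fin (r + 1) → ℤ | Conic Q}.Finite ∧
    {Q : Fin (r + 1) → ℤ | Conic Q}.ncard =
      (match r with
       | 3 => 3 | 4 => 5 | 5 => 10 | 6 => 27 | 7 => 126 | _ => 2160) := by
  have hconics : {Q : Fin (r + 1) → ℤ | Conic Q} = conicFinset r := by
    ext Q
    exact (mem_conicFinset h8).symm
  rw [hconics, Set.ncard_coe_finset, card_conicFinset]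
  refine ⟨(conicFinset r).finite_toSet, ?_⟩
  interval_cases r <;> simp only <;> decide
end

section
/- For 3 ≤ r ≤ 8 and any conic Q in Λ_r, the number of unordered pairs {E, E′} of exceptional classes in Λ_r with E + E′ = Q is exactly r − 1 (these pairs correspond to the r − 1 singular fibers of the conic fibration induced by Q). -/
/-!
Reflection in a root `α` (`α² = -2`, `K·α = 0`) is an isometry of `Λ_r` fixing `K`, so it
permutes the exceptional classes and the conics, and it carries the pairs `{E, E'}` with
`E + E' = Q` bijectively onto those summing to the reflected conic. Every conic has `Q₀ ≥ 1`.
When `Q₀ ≥ 2`, the multiplicities `m_j = -Q_j ≥ 0` satisfy `∑ m_j = 3Q₀ - 2` and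
`∑ m_j² = Q₀²`, which force `m_i + m_j + m_k > Q₀` for the three largest ones; the Cremona
reflection in `ℓ - e_i - e_j - e_k` then lowers `Q₀` to `2Q₀ - m_i - m_j - m_k`. Hence every
conic is a reflection image of some `ℓ - e_i`, whose pairs are `{e_j, ℓ - e_i - e_j}` for the
`r - 1` indices `j ≠ i`.
-/

namespace DelPezzo

theorem exists_single_of_sum_sq_eq_one {ι : Type*} {s : Finset ι} {f : ι → ℤ}
    (h : ∑ i ∈ s, f i ^ 2 = 1) :
    ∃ j ∈ s, (f j = 1 ∨ f j = -1) ∧ ∀ k ∈ s, k ≠ j → f k = 0 := by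
  classical
  obtain ⟨j, hj, hfj⟩ := Finset.exists_ne_zero_of_sum_ne_zero (h ▸ one_ne_zero)
  have hsplit := Finset.add_sum_erase s (fun i => f i ^ 2) hj
  have hnonneg : ∀ k ∈ s.erase j, 0 ≤ f k ^ 2 := fun k _ => sq_nonneg (f k)
  have hpos : 0 < f j ^ 2 := lt_of_le_of_ne (sq_nonneg _) (Ne.symm hfj)
  have hrest : ∑ k ∈ s.erase j, f k ^ 2 = 0 := by
    have := Finset.sum_nonneg hnonneg; omega
  refine ⟨j, hj, sq_eq_one_iff.mp (by omega), fun k hk hkj => ?_⟩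
  exact pow_eq_zero_iff two_ne_zero |>.mp <|
    (Finset.sum_eq_zero_iff_of_nonneg hnonneg).mp hrest k (Finset.mem_erase.mpr ⟨hkj, hk⟩)

theorem exists_top_three {ι : Type*} [Fintype ι] [DecidableEq ι] (hι : 3 ≤ Fintype.card ι)
    (f : ι → ℤ) :
    ∃ i j k : ι, j ≠ i ∧ k ≠ i ∧ k ≠ j ∧ f j ≤ f i ∧ f k ≤ f j ∧
      ∀ m, m ≠ i → m ≠ j → f m ≤ f k := by
  obtain ⟨i, -, hi⟩ := Finset.univ.exists_max_image f
    (Finset.univ_nonempty_iff.mpr (Fintype.card_pos_iff.mp (by omega)))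
  obtain ⟨j, hj, hj'⟩ := (Finset.univ.erase i).exists_max_image f
    (Finset.card_pos.mp (by
      rw [Finset.card_erase_of_mem (Finset.mem_univ i), Finset.card_univ]; omega))
  obtain ⟨k, hk, hk'⟩ := ((Finset.univ.erase i).erase j).exists_max_image f
    (Finset.card_pos.mp (by
      rw [Finset.card_erase_of_mem hj, Finset.card_erase_of_mem (Finset.mem_univ i),
        Finset.card_univ]; omega))
  simp only [Finset.mem_erase, Finset.mem_univ, and_true] at hj hk hj' hk'
  exact ⟨i, j, k, hj, hk.2, hk.1, hi j (Finset.mem_univ j), hj' k hk.2,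
    fun m hmi hmj => hk' m ⟨hmj, hmi⟩⟩

theorem exists_triple_sum_gt {ι : Type*} [Fintype ι] [DecidableEq ι] (hι : 3 ≤ Fintype.card ι)
    {f : ι → ℤ} (hf : ∀ m, 0 ≤ f m) {b : ℤ} (hb : 2 ≤ b)
    (hsum : ∑ m, f m = 3 * b - 2) (hsq : ∑ m, f m ^ 2 = b ^ 2) :
    ∃ i j k : ι, j ≠ i ∧ k ≠ i ∧ k ≠ j ∧ b < f i + f j + f k := by
  obtain ⟨i, j, k, hji, hki, hkj, hij, hjk, hrest⟩ := exists_top_three hι f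
  refine ⟨i, j, k, hji, hki, hkj, not_le.mp fun hle => ?_⟩
  have hpair : ∀ g : ι → ℤ, (∀ m, m ≠ i → m ≠ j → g m ≤ 0) → ∑ m, g m ≤ g i + g j :=
    fun g hg => by
      rw [← Finset.sum_pair hji.symm]
      exact Finset.sum_le_sum_of_subset_of_nonpos' (Finset.subset_univ _) fun m _ hm => by
        simp only [Finset.mem_insert, Finset.mem_singleton, not_or] at hm
        exact hg m hm.1 hm.2
  rcases (hf k).eq_or_lt with hk0 | hkpos
  · have := hpair f fun m hmi hmj => hk0 ▸ hrest m hmi hmj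
    omega
  · have := hpair (fun m => f m * (f m - f k)) fun m hmi hmj =>
      mul_nonpos_of_nonneg_of_nonpos (hf m) (by linarith [hrest m hmi hmj])
    have hexp : ∑ m, f m * (f m - f k) = b ^ 2 - f k * (3 * b - 2) := by
      simp only [mul_sub, Finset.sum_sub_distrib, ← Finset.sum_mul, hsum, ← sq, hsq]; ring
    -- with `c = f k`: `f i (f i - c) + f j (f j - c) ≤ (b - 2c)(b - 3c) < b² - c(3b - 2)`
    nlinarith [mul_nonneg (sub_nonneg.2 hij) (hf j), mul_nonneg (sub_nonneg.2 hjk) (hf k)]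

local notation "Λ" r:max => Fin (r + 1) → ℤ

variable {r : ℕ}

theorem pair_comm (x y : Λ r) : pair x y = pair y x := by
  simp only [pair, mul_comm]

theorem pair_add_left (x y z : Λ r) : pair (x + y) z = pair x z + pair y z := by
  simp only [pair, Pi.add_apply, add_mul, Finset.sum_add_distrib]; ring

theorem pair_sub_left (x y z : Λ r) : pair (x - y) z = pair x z - pair y z := by
  simp only [pair, Pi.sub_apply, sub_mul, Finset.sum_sub_distrib]; ring

theorem pair_smul_left (c : ℤ) (x y : Λ r) : pair (c • x) y = c * pair x y := by
  simp only [pair, Pi.smul_apply, smul_eq_mul, mul_assoc, ← Finset.mul_sum]; ring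

theorem pair_add_right (x y z : Λ r) : pair x (y + z) = pair x y + pair x z := by
  simp only [pair_comm x, pair_add_left]

theorem pair_sub_right (x y z : Λ r) : pair x (y - z) = pair x y - pair x z := by
  simp only [pair_comm x, pair_sub_left]

theorem pair_smul_right (c : ℤ) (x y : Λ r) : pair x (c • y) = c * pair x y := by
  simp only [pair_comm x, pair_smul_left]

theorem pair_self (x : Λ r) : pair x x = x 0 ^ 2 - ∑ i : Fin r, x i.succ ^ 2 := by
  simp only [pair, sq]

theorem pair_Kc (x : Λ r) : pair (Kc r) x = -3 * x 0 - ∑ i : Fin r, x i.succ := by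
  simp [pair, Kc, Fin.succ_ne_zero]

/-- The class `ℓ` of a line. -/
def lineClass (r : ℕ) : Λ r := Pi.single 0 1

/-- The class `e_j` of the `j`-th exceptional curve of the blow-up. -/
def exClass (j : Fin r) : Λ r := Pi.single j.succ 1

@[simp] theorem lineClass_zero : lineClass r 0 = 1 := rfl

@[simp] theorem lineClass_succ (i : Fin r) : lineClass r i.succ = 0 := by
  simp [lineClass, Fin.succ_ne_zero]

@[simp] theorem exClass_zero (j : Fin r) : exClass j 0 = 0 := by
  simp [exClass, (Fin.succ_ne_zero j).symm]

@[simp] theorem exClass_succ (j i : Fin r) : exClass j i.succ = if i = j then 1 else 0 := by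
  simp [exClass, Pi.single_apply]

@[simp] theorem pair_lineClass (x : Λ r) : pair x (lineClass r) = x 0 := by
  simp [pair]

@[simp] theorem lineClass_pair (x : Λ r) : pair (lineClass r) x = x 0 := by
  rw [pair_comm, pair_lineClass]

@[simp] theorem pair_exClass (x : Λ r) (j : Fin r) : pair x (exClass j) = -x j.succ := by
  simp [pair]

@[simp] theorem exClass_pair (x : Λ r) (j : Fin r) : pair (exClass j) x = -x j.succ := by
  rw [pair_comm, pair_exClass]

@[simp] theorem Kc_zero : Kc r 0 = -3 := rfl

@[simp] theorem Kc_succ (j : Fin r) : Kc r j.succ = 1 := by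
  simp [Kc, Fin.succ_ne_zero]

theorem exceptional_exClass (j : Fin r) : Exceptional (exClass j) := by
  simp [Exceptional]

theorem nef_coord_succ_nonpos {D : Λ r} (hD : Nef D) (j : Fin r) : D j.succ ≤ 0 := by
  simpa using hD _ (exceptional_exClass j)

theorem exceptional_lineClass_sub_sub {i j : Fin r} (hij : i ≠ j) :
    Exceptional (lineClass r - exClass i - exClass j) := by
  simp [Exceptional, pair_sub_right, hij, hij.symm]

section Reflection

/-- For `α² = -2` this is the orthogonal reflection in the hyperplane `α^⊥`. -/
def reflect (α x : Λ r) : Λ r := x + pair x α • α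

theorem reflect_add (α x y : Λ r) : reflect α (x + y) = reflect α x + reflect α y := by
  ext m
  simp only [reflect, pair_add_left, Pi.add_apply, Pi.smul_apply, smul_eq_mul]
  ring

theorem pair_Kc_reflect {α : Λ r} (hK : pair (Kc r) α = 0) (x : Λ r) :
    pair (Kc r) (reflect α x) = pair (Kc r) x := by
  rw [reflect, pair_add_right, pair_smul_right, hK, mul_zero, add_zero]

variable {α : Λ r}

theorem pair_reflect_reflect (hα : pair α α = -2) (x y : Λ r) :
    pair (reflect α x) (reflect α y) = pair x y := by
  simp only [reflect, pair_add_left, pair_add_right, pair_smul_left, pair_smul_right,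
    pair_comm y α, hα]
  ring

theorem reflect_involutive (hα : pair α α = -2) : Function.Involutive (reflect α) := by
  intro x
  ext m
  simp only [reflect, pair_add_left, pair_smul_left, hα, Pi.add_apply, Pi.smul_apply, smul_eq_mul]
  ring

theorem exceptional_reflect (hα : pair α α = -2) (hK : pair (Kc r) α = 0) {E : Λ r}
    (hE : Exceptional E) : Exceptional (reflect α E) :=
  ⟨by rw [pair_reflect_reflect hα, hE.1], by rw [pair_Kc_reflect hK, hE.2]⟩

theorem nef_reflect (hα : pair α α = -2) (hK : pair (Kc r) α = 0) {D : Λ r} (hD : Nef D) :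
    Nef (reflect α D) := by
  intro E hE
  rw [← reflect_involutive hα E, pair_reflect_reflect hα]
  exact hD _ (exceptional_reflect hα hK hE)

theorem conic_reflect (hα : pair α α = -2) (hK : pair (Kc r) α = 0) {Q : Λ r} (hQ : Conic Q) :
    Conic (reflect α Q) :=
  ⟨nef_reflect hα hK hQ.1, by rw [pair_reflect_reflect hα, hQ.2.1],
    by rw [pair_Kc_reflect hK, hQ.2.2]⟩

def exceptionalPairs (Q : Λ r) : Set (Sym2 (Λ r)) :=
  {p | ∃ E E' : Λ r, Exceptional E ∧ Exceptional E' ∧ E + E' = Q ∧ p = s(E, E')}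

theorem mapsTo_exceptionalPairs_reflect (hα : pair α α = -2) (hK : pair (Kc r) α = 0)
    (Q : Λ r) :
    Set.MapsTo (Sym2.map (reflect α)) (exceptionalPairs Q) (exceptionalPairs (reflect α Q)) := by
  rintro _ ⟨E, E', hE, hE', rfl, rfl⟩
  exact ⟨reflect α E, reflect α E', exceptional_reflect hα hK hE, exceptional_reflect hα hK hE',
    (reflect_add α E E').symm, rfl⟩

theorem exceptionalPairs_reflect (hα : pair α α = -2) (hK : pair (Kc r) α = 0) (Q : Λ r) :
    exceptionalPairs (reflect α Q) = Sym2.map (reflect α) '' exceptionalPairs Q := by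
  have hinv : Function.Involutive (Sym2.map (reflect α)) := fun p => by
    rw [Sym2.map_map, (reflect_involutive hα).comp_self, Sym2.map_id, id]
  refine Set.Subset.antisymm (fun p hp => ⟨Sym2.map (reflect α) p, ?_, hinv p⟩)
    (mapsTo_exceptionalPairs_reflect hα hK Q).image_subset
  simpa only [reflect_involutive hα Q] using mapsTo_exceptionalPairs_reflect hα hK _ hp

theorem reflect_exceptionalPairs_count (hα : pair α α = -2) (hK : pair (Kc r) α = 0) {Q : Λ r}
    {n : ℕ} (h : (exceptionalPairs Q).Finite ∧ (exceptionalPairs Q).ncard = n) :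
    (exceptionalPairs (reflect α Q)).Finite ∧ (exceptionalPairs (reflect α Q)).ncard = n := by
  rw [exceptionalPairs_reflect hα hK]
  exact ⟨h.1.image _, (Set.ncard_image_of_injective _
    (Sym2.map.injective (reflect_involutive hα).injective)).trans h.2⟩

end Reflection

theorem pair_add_self_eq_zero {E E' : Λ r} (hE : Exceptional E) (hE' : Exceptional E')
    (h : pair (E + E') (E + E') = 0) : pair (E + E') E = 0 := by
  simp only [pair_add_left, pair_add_right, pair_comm E' E, hE.1, hE'.1] at h ⊢
  linarith

theorem exceptional_orthogonal_lineClass_sub {i : Fin r} {E : Λ r} (hE : Exceptional E)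
    (h : pair (lineClass r - exClass i) E = 0) :
    ∃ j ≠ i, E = exClass j ∨ E = lineClass r - exClass i - exClass j := by
  have hi : E i.succ = -E 0 := by
    simp only [pair_sub_left, lineClass_pair, exClass_pair] at h; linarith
  have hsq : ∑ m ∈ Finset.univ.erase i, E m.succ ^ 2 = 1 := by
    have := hE.1
    rw [pair_self, ← Finset.add_sum_erase _ _ (Finset.mem_univ i), hi] at this
    linarith
  have hsum : ∑ m ∈ Finset.univ.erase i, E m.succ = 1 - 2 * E 0 := by
    have := hE.2
    rw [pair_Kc, ← Finset.add_sum_erase _ _ (Finset.mem_univ i), hi] at this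
    linarith
  obtain ⟨j, hj, hpm, hzero⟩ := exists_single_of_sum_sq_eq_one hsq
  have hji : j ≠ i := Finset.ne_of_mem_erase hj
  have hj' : E j.succ = 1 - 2 * E 0 := by
    rw [← hsum, Finset.sum_eq_single_of_mem j hj hzero]
  have hrest : ∀ m, m ≠ i → m ≠ j → E m.succ = 0 := fun m hmi hmj =>
    hzero m (Finset.mem_erase.mpr ⟨hmi, Finset.mem_univ m⟩) hmj
  refine ⟨j, hji, ?_⟩
  have hE0 : E 0 = 0 ∨ E 0 = 1 := by omega
  refine hE0.imp (fun hE0 => ?_) (fun hE0 => ?_) <;> ext m <;> cases m using Fin.cases <;>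
    simp only [hE0, Pi.sub_apply, lineClass_zero, lineClass_succ, exClass_zero, exClass_succ] <;>
    grind

theorem exceptionalPairs_lineClass_sub (i : Fin r) :
    exceptionalPairs (lineClass r - exClass i) =
      (fun j => s(exClass j, lineClass r - exClass i - exClass j)) '' {i}ᶜ := by
  apply Set.Subset.antisymm
  · rintro _ ⟨E, E', hE, hE', hsum, rfl⟩
    have hQ : pair (E + E') (E + E') = 0 := by
      rw [hsum]; simp [pair_sub_right]
    have hE'eq : E' = lineClass r - exClass i - E := by rw [← hsum]; abel
    obtain ⟨j, hji, rfl | rfl⟩ :=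
      exceptional_orthogonal_lineClass_sub hE (hsum ▸ pair_add_self_eq_zero hE hE' hQ)
    · exact ⟨j, hji, by rw [hE'eq]⟩
    · exact ⟨j, hji, by rw [hE'eq, sub_sub_cancel, Sym2.eq_swap]⟩
  · rintro _ ⟨j, hji, rfl⟩
    exact ⟨_, _, exceptional_exClass j, exceptional_lineClass_sub_sub (Ne.symm hji),
      add_sub_cancel _ _, rfl⟩

theorem exceptionalPairs_lineClass_sub_count (i : Fin r) :
    (exceptionalPairs (lineClass r - exClass i)).Finite ∧
      (exceptionalPairs (lineClass r - exClass i)).ncard = r - 1 := by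
  have hinj : Function.Injective fun j : Fin r =>
      s(exClass j, lineClass r - exClass i - exClass j) := by
    intro j j' h
    rcases Sym2.eq_iff.mp h with ⟨h, -⟩ | ⟨h, -⟩
    · simpa using congrFun h j.succ
    · simpa using congrFun h 0
  rw [exceptionalPairs_lineClass_sub]
  refine ⟨Set.toFinite _, ?_⟩
  rw [Set.ncard_image_of_injective _ hinj, Set.ncard_compl, Set.ncard_singleton, Nat.card_fin]

theorem one_le_conic_zero {Q : Λ r} (hQ : Conic Q) : 1 ≤ Q 0 := by
  have hsum : ∑ m : Fin r, Q m.succ = 2 - 3 * Q 0 := by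
    have := hQ.2.2; rw [pair_Kc] at this; linarith
  have := Finset.sum_nonpos fun m (_ : m ∈ Finset.univ) => nef_coord_succ_nonpos hQ.1 m
  linarith

theorem conic_eq_lineClass_sub {Q : Λ r} (hQ : Conic Q) (h0 : Q 0 = 1) :
    ∃ i, Q = lineClass r - exClass i := by
  have hsq : ∑ m : Fin r, Q m.succ ^ 2 = 1 := by
    have := hQ.2.1; rw [pair_self, h0] at this; linarith
  have hsum : ∑ m : Fin r, Q m.succ = -1 := by
    have := hQ.2.2; rw [pair_Kc, h0] at this; linarith
  obtain ⟨i, -, -, hzero⟩ := exists_single_of_sum_sq_eq_one hsq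
  have hi : Q i.succ = -1 := by
    rw [← hsum, Finset.sum_eq_single i fun m _ hmi => hzero m (Finset.mem_univ m) hmi]
    simp
  refine ⟨i, ?_⟩
  ext m
  cases m using Fin.cases <;>
    simp only [h0, Pi.sub_apply, lineClass_zero, lineClass_succ, exClass_zero, exClass_succ] <;>
    grind

/-- Reflection in this root is the quadratic Cremona transformation centred at the points
`p_i, p_j, p_k`. -/
def cremonaRoot (i j k : Fin r) : Λ r := lineClass r - exClass i - exClass j - exClass k

theorem pair_cremonaRoot {i j k : Fin r} (hji : j ≠ i) (hki : k ≠ i) (hkj : k ≠ j) :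
    pair (cremonaRoot i j k) (cremonaRoot i j k) = -2 := by
  simp [cremonaRoot, pair_sub_right, hji, hki, hkj, hji.symm, hki.symm, hkj.symm]

theorem pair_Kc_cremonaRoot (i j k : Fin r) : pair (Kc r) (cremonaRoot i j k) = 0 := by
  simp [cremonaRoot, pair_sub_right]

theorem reflect_cremonaRoot_zero (i j k : Fin r) (x : Λ r) :
    reflect (cremonaRoot i j k) x 0 = 2 * x 0 + x i.succ + x j.succ + x k.succ := by
  have hpair : pair x (cremonaRoot i j k) = x 0 + x i.succ + x j.succ + x k.succ := by
    simp [cremonaRoot, pair_sub_right]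
  have hroot : cremonaRoot i j k 0 = 1 := by simp [cremonaRoot]
  rw [reflect, Pi.add_apply, Pi.smul_apply, smul_eq_mul, hpair, hroot]
  ring

theorem exists_reflect_conic_zero_lt (h3 : 3 ≤ r) {Q : Λ r} (hQ : Conic Q) (h2 : 2 ≤ Q 0) :
    ∃ α : Λ r, pair α α = -2 ∧ pair (Kc r) α = 0 ∧ reflect α Q 0 < Q 0 := by
  have hsum : ∑ m : Fin r, -Q m.succ = 3 * Q 0 - 2 := by
    have := hQ.2.2; rw [pair_Kc] at this; rw [Finset.sum_neg_distrib]; linarith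
  have hsq : ∑ m : Fin r, (-Q m.succ) ^ 2 = Q 0 ^ 2 := by
    have := hQ.2.1; rw [pair_self] at this; simp only [neg_sq]; linarith
  obtain ⟨i, j, k, hji, hki, hkj, hlt⟩ := exists_triple_sum_gt (by simpa using h3)
    (fun m => neg_nonneg.mpr (nef_coord_succ_nonpos hQ.1 m)) h2 hsum hsq
  exact ⟨cremonaRoot i j k, pair_cremonaRoot hji hki hkj, pair_Kc_cremonaRoot i j k,
    by rw [reflect_cremonaRoot_zero]; linarith⟩

theorem conic_induction (h3 : 3 ≤ r) {P : Λ r → Prop} (base : ∀ i, P (lineClass r - exClass i))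
    (step : ∀ α Q, pair α α = -2 → pair (Kc r) α = 0 → P Q → P (reflect α Q))
    {Q : Λ r} (hQ : Conic Q) : P Q := by
  induction hn : (Q 0).toNat using Nat.strong_induction_on generalizing Q with
  | _ n ih =>
    rcases (one_le_conic_zero hQ).eq_or_lt with h1 | h2
    · obtain ⟨i, rfl⟩ := conic_eq_lineClass_sub hQ h1.symm
      exact base i
    · obtain ⟨α, hα, hK, hlt⟩ := exists_reflect_conic_zero_lt h3 hQ h2
      have hQ' := conic_reflect hα hK hQ
      rw [← reflect_involutive hα Q]
      exact step α _ hα hK (ih _ (by have := one_le_conic_zero hQ'; omega) hQ' rfl)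

end DelPezzo

theorem conic_pairs_count_general (r : ℕ) (h3 : 3 ≤ r)
    (Q : Fin (r + 1) → ℤ) (hQ : Conic Q) :
    {p : Sym2 (Fin (r + 1) → ℤ) |
        ∃ E E' : Fin (r + 1) → ℤ, Exceptional E ∧ Exceptional E' ∧
          E + E' = Q ∧ p = Sym2.mk E E'}.Finite ∧
    {p : Sym2 (Fin (r + 1) → ℤ) |
        ∃ E E' : Fin (r + 1) → ℤ, Exceptional E ∧ Exceptional E' ∧
          E + E' = Q ∧ p = Sym2.mk E E'}.ncard = r - 1 := by
  open DelPezzo in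
  exact conic_induction (P := fun Q => (exceptionalPairs Q).Finite ∧
      (exceptionalPairs Q).ncard = r - 1) h3
    exceptionalPairs_lineClass_sub_count
    (fun _ _ hα hK => reflect_exceptionalPairs_count hα hK) hQ

/-- For `3 ≤ r ≤ 8` and any conic `Q` in `Λ_r`, the number of unordered pairs
`{E, E′}` of exceptional classes with `E + E′ = Q` is exactly `r − 1`. -/
theorem conic_pairs_count (r : ℕ) (h3 : 3 ≤ r) (h8 : r ≤ 8)
    (Q : Fin (r + 1) → ℤ) (hQ : Conic Q) :
    {p : Sym2 (Fin (r + 1) → ℤ) |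
        ∃ E E' : Fin (r + 1) → ℤ, Exceptional E ∧ Exceptional E' ∧
          E + E' = Q ∧ p = Sym2.mk E E'}.Finite ∧
    {p : Sym2 (Fin (r + 1) → ℤ) |
        ∃ E E' : Fin (r + 1) → ℤ, Exceptional E ∧ Exceptional E' ∧
          E + E' = Q ∧ p = Sym2.mk E E'}.ncard = r - 1 :=
  conic_pairs_count_general r h3 Q hQ
end

section
/- Every nef class D ∈ Λ₅ with ⟨−K₅, D⟩ = 3 satisfies ⟨D, D⟩ = 1; that is, every nef class of anticanonical degree 3 in the Picard lattice of the degree-4 del Pezzo surface is a twisted cubic. -/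
/-!
Write `D = (a, b₁, …, b₅)`. Pairing `D` with the sixteen exceptional classes `eᵢ`, `e₀ − eᵢ − eⱼ`
and `2e₀ − e₁ − ⋯ − e₅` gives linear inequalities which, together with `3a + ∑ bᵢ = 3`, force
every `bᵢ` into `{1 − a, 2 − a}`. Hence `bᵢ² = (3 − 2a) bᵢ − (1 − a)(2 − a)` is linear in `bᵢ`, and
summing gives `∑ bᵢ² = a² − 1`, i.e. `D² = 1`.
-/

section Pairing

variable {r : ℕ}

lemma pair_sub_right (x y z : Fin (r + 1) → ℤ) : pair x (y - z) = pair x y - pair x z := by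
  simp only [pair, Pi.sub_apply, mul_sub, Finset.sum_sub_distrib]
  ring

lemma pair_single_zero_right (x : Fin (r + 1) → ℤ) : pair x (Pi.single 0 1) = x 0 := by
  simp [pair, Fin.succ_ne_zero]

lemma pair_single_succ_right (x : Fin (r + 1) → ℤ) (i : Fin r) :
    pair x (Pi.single i.succ 1) = -x i.succ := by
  simp [pair, Pi.single_apply]

lemma pair_ite_zero_right (x : Fin (r + 1) → ℤ) (c d : ℤ) :
    pair x (fun k => if k = 0 then c else d) = c * x 0 - d * ∑ i : Fin r, x i.succ := by
  simp [pair, Fin.succ_ne_zero, Finset.mul_sum, mul_comm]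

lemma neg_Kc_eq (r : ℕ) : -Kc r = fun k => if k = 0 then 3 else -1 := by
  funext k
  by_cases hk : k = 0 <;> simp [Kc, hk]

lemma pair_neg_Kc (D : Fin (r + 1) → ℤ) : pair (-Kc r) D = 3 * D 0 + ∑ i : Fin r, D i.succ := by
  rw [pair_comm, neg_Kc_eq, pair_ite_zero_right]
  ring

end Pairing

section ExceptionalClasses

variable {r : ℕ}

def lineClass (i j : Fin r) : Fin (r + 1) → ℤ :=
  Pi.single 0 1 - Pi.single i.succ 1 - Pi.single j.succ 1

lemma pair_lineClass_right (x : Fin (r + 1) → ℤ) (i j : Fin r) :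
    pair x (lineClass i j) = x 0 + x i.succ + x j.succ := by
  simp only [lineClass, pair_sub_right, pair_single_zero_right, pair_single_succ_right]
  ring

lemma exceptional_single (i : Fin r) : Exceptional (Pi.single i.succ 1 : Fin (r + 1) → ℤ) := by
  simp [Exceptional, pair_single_succ_right, Kc, Fin.succ_ne_zero]

lemma exceptional_lineClass {i j : Fin r} (hij : i ≠ j) : Exceptional (lineClass i j) := by
  have hj : j.succ ≠ i.succ := (Fin.succ_injective r).ne hij.symm
  refine ⟨?_, ?_⟩ <;> rw [pair_lineClass_right]
  · simp [lineClass, Fin.succ_ne_zero, hij, hj]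
  · simp [Kc, Fin.succ_ne_zero]

lemma exceptional_two_neg_one :
    Exceptional (fun k : Fin (5 + 1) => if k = 0 then (2 : ℤ) else -1) :=
  ⟨by decide, by decide⟩

end ExceptionalClasses

lemma mul_self_eq_of_le_of_le_add_one {x c : ℤ} (h₁ : c ≤ x) (h₂ : x ≤ c + 1) :
    x * x = (2 * c + 1) * x - c * (c + 1) := by
  obtain rfl | rfl : x = c ∨ x = c + 1 := by omega
  all_goals ring

lemma bounds_of_deg_three_inequalities {a : ℤ} {b : Fin 5 → ℤ} (hpoint : ∀ j, b j ≤ 0)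
    (hline : ∀ j k, j ≠ k → 0 ≤ a + b j + b k) (hconic : 0 ≤ 2 * a + ∑ j, b j)
    (hdeg : 3 * a + ∑ j, b j = 3) (i : Fin 5) : 1 - a ≤ b i ∧ b i ≤ 2 - a := by
  simp only [Fin.sum_univ_succ, Fin.sum_univ_zero] at hconic hdeg
  simp only [Fin.forall_fin_succ, IsEmpty.forall_iff, ne_eq, Fin.succ_inj, Fin.succ_ne_zero,
    (Fin.succ_ne_zero _).symm, not_false_eq_true, not_true_eq_false, forall_const, and_true]
    at hpoint hline
  revert i
  simp only [Fin.forall_fin_succ, IsEmpty.forall_iff, and_true]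
  omega

lemma Nef.bounds_of_deg_three {D : Fin (5 + 1) → ℤ} (hD : Nef D) (hdeg : pair (-Kc 5) D = 3)
    (i : Fin 5) : 1 - D 0 ≤ D i.succ ∧ D i.succ ≤ 2 - D 0 := by
  refine bounds_of_deg_three_inequalities (b := fun j => D j.succ) (fun j => ?_)
    (fun j k hjk => ?_) ?_ (by rwa [pair_neg_Kc] at hdeg) i
  · simpa [pair_single_succ_right] using hD _ (exceptional_single j)
  · simpa [pair_lineClass_right] using hD _ (exceptional_lineClass hjk)
  · simpa [pair_ite_zero_right] using hD _ exceptional_two_neg_one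

/-- Every nef class of anticanonical degree `3` in `Λ₅` is a twisted cubic,
i.e. has self-intersection `1`. -/
theorem nef_deg_three_is_twistedCubic (D : Fin (5 + 1) → ℤ) (hD : Nef D)
    (hdeg : pair (-Kc 5) D = 3) :
    pair D D = 1 := by
  have hsq : ∀ i : Fin 5,
      D i.succ * D i.succ = (3 - 2 * D 0) * D i.succ - (1 - D 0) * (2 - D 0) := fun i => by
    obtain ⟨hlow, hup⟩ := hD.bounds_of_deg_three hdeg i
    linear_combination mul_self_eq_of_le_of_le_add_one hlow (by linarith)
  have hsum : ∑ i : Fin 5, D i.succ = 3 - 3 * D 0 := by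
    rw [pair_neg_Kc] at hdeg
    linarith
  rw [pair, Finset.sum_congr rfl fun i _ => hsq i, Finset.sum_sub_distrib, ← Finset.mul_sum, hsum]
  simp only [Finset.sum_const, Finset.card_univ, Fintype.card_fin, nsmul_eq_mul, Nat.cast_ofNat]
  ring
end

section
/- The number of classes D ∈ Λ₅ that can be written in the form D = E + E′ for exceptional classes E, E′ (not necessarily distinct) is exactly 106; these are the effective classes of anticanonical degree 2 on the degree-4 del Pezzo surface, counted type by type as 5 + 10 + 30 + 5 + 10 + 30 + 5 + 10 + 1 = 106. -/
open Finset Pointwise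

section

variable {r : ℕ}

lemma pair_self (E : Fin (r + 1) → ℤ) : pair E E = E 0 ^ 2 - ∑ i : Fin r, E i.succ ^ 2 := by
  simp only [pair, sq]

lemma pair_Kc (E : Fin (r + 1) → ℤ) : pair (Kc r) E = -3 * E 0 - ∑ i : Fin r, E i.succ := by
  simp [pair, Kc, Fin.succ_ne_zero]

lemma Exceptional.sum_sq_tail {E : Fin (r + 1) → ℤ} (hE : Exceptional E) :
    ∑ i : Fin r, E i.succ ^ 2 = E 0 ^ 2 + 1 := by
  linarith [hE.1, pair_self E]

lemma Exceptional.sum_tail {E : Fin (r + 1) → ℤ} (hE : Exceptional E) :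
    ∑ i : Fin r, E i.succ = 1 - 3 * E 0 := by
  linarith [hE.2, pair_Kc E]

lemma sq_sum_sub_le (v : Fin r → ℤ) (i : Fin r) :
    (∑ j, v j - v i) ^ 2 ≤ (r - 1) * (∑ j, v j ^ 2 - v i ^ 2) := by
  have h := sq_sum_le_card_mul_sum_sq (s := univ.erase i) (f := v)
  rwa [card_erase_of_mem (mem_univ i), card_univ, Fintype.card_fin,
    Nat.cast_sub (Nat.one_le_of_lt i.isLt), sum_erase_eq_sub (mem_univ i),
    sum_erase_eq_sub (mem_univ i), Nat.cast_one] at h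

end

instance {r : ℕ} : DecidablePred (@Exceptional r) := fun E => by
  unfold Exceptional; infer_instance

def smallClasses : Finset (Fin 6 → ℤ) :=
  Fintype.piFinset fun i => if i = 0 then {0, 1, 2} else {-1, 0, 1}

lemma Exceptional.mem_smallClasses {E : Fin 6 → ℤ} (hE : Exceptional E) :
    E ∈ smallClasses := by
  have hsq := hE.sum_sq_tail
  have hsum := hE.sum_tail
  have hdeg := sq_sum_le_card_mul_sum_sq (s := univ) (f := fun i : Fin 5 => E i.succ)
  simp only [card_univ, Fintype.card_fin, hsq, hsum, Nat.cast_ofNat] at hdeg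
  have h0 : 0 ≤ E 0 ∧ E 0 ≤ 2 := by constructor <;> nlinarith
  have htail (i : Fin 5) : -1 ≤ E i.succ ∧ E i.succ ≤ 1 := by
    have hi := sq_sum_sub_le (fun j : Fin 5 => E j.succ) i
    simp only [hsq, hsum, Nat.cast_ofNat] at hi
    obtain ⟨h0l, h0u⟩ := h0
    interval_cases E 0 <;> constructor <;> nlinarith
  rw [smallClasses, Fintype.mem_piFinset]
  intro i
  cases i using Fin.cases with
  | zero =>
    simp only [if_pos, mem_insert, mem_singleton]
    omega
  | succ i =>
    simp only [if_neg (Fin.succ_ne_zero i), mem_insert, mem_singleton]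
    have := htail i
    omega

-- `Eᵢ`, `L − Eᵢ − Eⱼ` and `2L − E₁ − ⋯ − E₅`, where `L = (1; 0, …, 0)`.
def exceptionalClasses : Finset (Fin 6 → ℤ) :=
  { ![0,1,0,0,0,0], ![0,0,1,0,0,0], ![0,0,0,1,0,0], ![0,0,0,0,1,0], ![0,0,0,0,0,1],
    ![1,-1,-1,0,0,0], ![1,-1,0,-1,0,0], ![1,-1,0,0,-1,0], ![1,-1,0,0,0,-1],
    ![1,0,-1,-1,0,0], ![1,0,-1,0,-1,0], ![1,0,-1,0,0,-1],
    ![1,0,0,-1,-1,0], ![1,0,0,-1,0,-1], ![1,0,0,0,-1,-1],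
    ![2,-1,-1,-1,-1,-1] }

set_option maxRecDepth 10000 in
lemma mem_exceptionalClasses_of_mem_smallClasses :
    ∀ E ∈ smallClasses, Exceptional E → E ∈ exceptionalClasses := by
  decide

lemma exceptional_of_mem_exceptionalClasses : ∀ E ∈ exceptionalClasses, Exceptional E := by
  decide

lemma setOf_exceptional : {E : Fin 6 → ℤ | Exceptional E} = exceptionalClasses := by
  ext E
  exact ⟨fun hE => mem_exceptionalClasses_of_mem_smallClasses E hE.mem_smallClasses hE,
    exceptional_of_mem_exceptionalClasses E⟩

set_option maxRecDepth 10000 in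
lemma card_exceptionalClasses_add_self :
    (exceptionalClasses + exceptionalClasses).card = 106 := by
  decide

/-- The number of classes `D ∈ Λ₅` expressible as a sum `E + E′` of two (not
necessarily distinct) exceptional classes is exactly
`5 + 10 + 30 + 5 + 10 + 30 + 5 + 10 + 1 = 106`. -/
theorem sum_of_two_exceptional_count :
    {D : Fin (5 + 1) → ℤ |
        ∃ E E' : Fin (5 + 1) → ℤ, Exceptional E ∧ Exceptional E' ∧
          D = E + E'}.Finite ∧
    {D : Fin (5 + 1) → ℤ |
        ∃ E E' : Fin (5 + 1) → ℤ, Exceptional E ∧ Exceptional E' ∧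
          D = E + E'}.ncard = 106 := by
  have hsums : {D : Fin (5 + 1) → ℤ |
      ∃ E E' : Fin (5 + 1) → ℤ, Exceptional E ∧ Exceptional E' ∧ D = E + E'} =
      ↑(exceptionalClasses + exceptionalClasses) := by
    rw [coe_add, ← setOf_exceptional]
    ext D
    simp only [Set.mem_ofPred_eq, Set.mem_add, exists_and_left, eq_comm]
  rw [hsums, Set.ncard_coe_finset, card_exceptionalClasses_add_self]
  exact ⟨finite_toSet _, rfl⟩
end
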